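/- Let R be a semiprime ring and L a Lie ideal with ℓ_R([L, R]) = 0 (zero left annihilator). If a[L, R]a = 0 for some a ∈ R, then aLa = 0. Consequently, R is L-semiprime if and only if R is [L, R]-semiprime. -/

import Mathlib

/-!
If `a[L, R]a = 0`, then `[L, R]` is again a Lie ideal, so semiprimeness gives `a²[L, R] = 0`,
and the zero left annihilator of `[L, R]` forces `a² = 0`. Then `(axa) r (axa) = a[x, ar]a·xa`
for `x ∈ L`, which vanishes, so `aLa = 0`. The equivalence of the two semiprimeness notions
follows because `[L, R] ⊆ L`.
-/

/-- The additive subgroup generated by commutators `a * b - b * a` with `a ∈ A`, `b ∈ B`. -/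
def lieBr {R : Type*} [Ring R] (A B : Set R) : AddSubgroup R :=
  AddSubgroup.closure {z : R | ∃ a ∈ A, ∃ b ∈ B, z = a * b - b * a}

section LieIdeal

variable {R : Type*} [Ring R]

theorem commutator_mem_lieBr {A B : Set R} {a b : R} (ha : a ∈ A) (hb : b ∈ B) :
    a * b - b * a ∈ lieBr A B :=
  AddSubgroup.subset_closure ⟨a, ha, b, hb, rfl⟩

variable {L : AddSubgroup R} (hL : ∀ x ∈ L, ∀ r : R, x * r - r * x ∈ L)
include hL

theorem lieBr_univ_le : lieBr (L : Set R) Set.univ ≤ L := by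
  rw [lieBr, AddSubgroup.closure_le]
  rintro z ⟨x, hx, b, -, rfl⟩
  exact hL x hx b

theorem commutator_mem_lieBr_univ {k : R} (hk : k ∈ lieBr (L : Set R) Set.univ) (r : R) :
    k * r - r * k ∈ lieBr (L : Set R) Set.univ := by
  set K := lieBr (L : Set R) Set.univ
  induction hk using AddSubgroup.closure_induction generalizing r with
  | mem z hz =>
    obtain ⟨x, hx, b, -, rfl⟩ := hz
    -- Jacobi identity: `[[x, b], r] = [[x, r], b] + [x, [b, r]]`.
    have jacobi : (x * b - b * x) * r - r * (x * b - b * x) =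
        ((x * r - r * x) * b - b * (x * r - r * x)) + (x * (b * r - r * b) - (b * r - r * b) * x) := by
      noncomm_ring
    rw [jacobi]
    exact K.add_mem (commutator_mem_lieBr (hL x hx r) trivial)
      (commutator_mem_lieBr hx trivial)
  | zero => simp
  | add x y _ _ ihx ihy =>
    rw [show (x + y) * r - r * (x + y) = (x * r - r * x) + (y * r - r * y) by noncomm_ring]
    exact K.add_mem (ihx r) (ihy r)
  | neg x _ ihx =>
    rw [show -x * r - r * -x = -(x * r - r * x) by noncomm_ring]
    exact K.neg_mem (ihx r)

end LieIdeal

section Semiprime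

variable {R : Type*} [Ring R] (hsp : ∀ x : R, (∀ r : R, x * r * x = 0) → x = 0)
include hsp

theorem mul_self_mul_eq_zero_of_forall_mul_mul_eq_zero {K : Set R}
    (hK : ∀ k ∈ K, ∀ r : R, k * r - r * k ∈ K) {a : R} (ha : ∀ k ∈ K, a * k * a = 0)
    {k : R} (hk : k ∈ K) : a * a * k = 0 := by
  refine hsp _ fun r => ?_
  have e₁ : a * (k * (r * a) - r * a * k) * a = 0 := ha _ (hK k hk (r * a))
  have e₂ : a * k * a = 0 := ha k hk
  linear_combination (norm := noncomm_ring) a * e₁ * k + a * a * r * e₂ * k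

theorem mul_mul_eq_zero_of_mul_self_eq_zero {a x : R} (ha : a * a = 0)
    (h : ∀ r : R, a * (x * (a * r) - a * r * x) * a = 0) : a * x * a = 0 := by
  refine hsp _ fun r => ?_
  linear_combination (norm := noncomm_ring) h r * (x * a) + ha * (r * x * a * x * a)

end Semiprime

theorem stmt16 {R : Type*} [Ring R]
    (hsp : ∀ x : R, (∀ r : R, x * r * x = 0) → x = 0)
    (L : AddSubgroup R) (hL : ∀ x ∈ L, ∀ r : R, x * r - r * x ∈ L)
    (hann : ∀ r : R, (∀ x ∈ lieBr (L : Set R) Set.univ, r * x = 0) → r = 0) :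
    (∀ a : R, (∀ x ∈ lieBr (L : Set R) Set.univ, a * x * a = 0) → ∀ x ∈ L, a * x * a = 0) ∧
    ((∀ a : R, (∀ x ∈ L, a * x * a = 0) → a = 0) ↔
      (∀ a : R, (∀ x ∈ lieBr (L : Set R) Set.univ, a * x * a = 0) → a = 0)) := by
  have main : ∀ a : R, (∀ x ∈ lieBr (L : Set R) Set.univ, a * x * a = 0) →
      ∀ x ∈ L, a * x * a = 0 := by
    intro a ha x hx
    have ha₂ : a * a = 0 := hann _ fun k hk =>
      mul_self_mul_eq_zero_of_forall_mul_mul_eq_zero hsp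
        (fun _ hk' => commutator_mem_lieBr_univ hL hk') ha hk
    exact mul_mul_eq_zero_of_mul_self_eq_zero hsp ha₂ fun r =>
      ha _ (commutator_mem_lieBr hx trivial)
  exact ⟨main, fun hLsp a ha => hLsp a (main a ha),
    fun hKsp a ha => hKsp a fun k hk => ha k (lieBr_univ_le hL hk)⟩
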